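/- arXiv:2310.03205 — 2 statements merged into one kernel-verified Lean document; each statement's English description precedes it below -/
import Mathlib

section
/- Suppose a differentiable function L : ℝ^d → ℝ satisfies the semi-smoothness inequality L(w + v) ≤ L(w) + ⟨∇L(w), v⟩ + C₁‖v‖² + C₂‖v‖·√(L(w)) for all w, v, together with the gradient lower bound ‖∇L(w)‖² ≥ μ·L(w) and upper bound ‖∇L(w)‖² ≤ M·L(w), with L ≥ 0 everywhere. Then for the gradient-descent step w' = w − ρ∇L(w) with ρ > 0, one has L(w') ≤ (1 − ρμ + ρ²C₁M + ρC₂√M)·L(w). -/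
open scoped RealInnerProductSpace

theorem stmt_2 (d : ℕ) (L : EuclideanSpace ℝ (Fin d) → ℝ)
    (hdiff : Differentiable ℝ L)
    (C₁ C₂ μ M ρ : ℝ) (hC₁ : 0 < C₁) (hC₂ : 0 < C₂) (hμ : 0 < μ) (hM : 0 < M) (hρ : 0 < ρ)
    (hnn : ∀ w, 0 ≤ L w)
    (hsemi : ∀ w v, L (w + v) ≤ L w + ⟪gradient L w, v⟫ + C₁ * ‖v‖ ^ 2
      + C₂ * ‖v‖ * Real.sqrt (L w))
    (hlow : ∀ w, μ * L w ≤ ‖gradient L w‖ ^ 2)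
    (hup : ∀ w, ‖gradient L w‖ ^ 2 ≤ M * L w)
    (w w' : EuclideanSpace ℝ (Fin d)) (hw' : w' = w - ρ • gradient L w) :
    L w' ≤ (1 - ρ * μ + ρ ^ 2 * C₁ * M + ρ * C₂ * Real.sqrt M) * L w := by
  set g := gradient L w with hg
  have h1 := hsemi w (-(ρ • g))
  have hw'' : w' = w + -(ρ • g) := by rw [hw']; abel
  rw [← hw''] at h1
  have hinner : ⟪g, -(ρ • g)⟫ = -(ρ * ‖g‖ ^ 2) := by
    rw [inner_neg_right, real_inner_smul_right, real_inner_self_eq_norm_sq]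
  have hnrm : ‖-(ρ • g)‖ = ρ * ‖g‖ := by
    rw [norm_neg, norm_smul, Real.norm_eq_abs, abs_of_pos hρ]
  rw [hinner, hnrm] at h1
  have hgub : ‖g‖ ≤ Real.sqrt M * Real.sqrt (L w) := by
    have := hup w
    have h2 : ‖g‖ = Real.sqrt (‖g‖ ^ 2) := by
      rw [Real.sqrt_sq (norm_nonneg _)]
    rw [h2, ← Real.sqrt_mul hM.le]
    exact Real.sqrt_le_sqrt this
  have hsq : Real.sqrt (L w) * Real.sqrt (L w) = L w := Real.mul_self_sqrt (hnn w)
  have hlow' := hlow w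
  have hup' := hup w
  rw [← hg] at hlow' hup'
  have hterm : C₂ * (ρ * ‖g‖) * Real.sqrt (L w) ≤ ρ * C₂ * Real.sqrt M * L w := by
    have h := mul_le_mul_of_nonneg_right hgub (Real.sqrt_nonneg (L w))
    have h2 : ‖g‖ * Real.sqrt (L w) ≤ Real.sqrt M * L w := by
      calc ‖g‖ * Real.sqrt (L w) ≤ Real.sqrt M * Real.sqrt (L w) * Real.sqrt (L w) := h
        _ = Real.sqrt M * L w := by rw [mul_assoc, hsq]
    calc C₂ * (ρ * ‖g‖) * Real.sqrt (L w) = (ρ * C₂) * (‖g‖ * Real.sqrt (L w)) := by ring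
      _ ≤ (ρ * C₂) * (Real.sqrt M * L w) :=
        mul_le_mul_of_nonneg_left h2 (mul_pos hρ hC₂).le
      _ = ρ * C₂ * Real.sqrt M * L w := by ring
  have ha : ρ * (μ * L w) ≤ ρ * ‖g‖ ^ 2 := mul_le_mul_of_nonneg_left hlow' hρ.le
  have hb : C₁ * (ρ * ‖g‖) ^ 2 ≤ ρ ^ 2 * C₁ * M * L w := by
    have := mul_le_mul_of_nonneg_left hup' (mul_pos (mul_pos hρ hρ) hC₁).le
    nlinarith
  nlinarith [h1, hterm, ha, hb]
end

section
/- Under the hypotheses of the semi-smooth descent step (semi-smoothness with constants C₁, C₂, gradient bounds μ·L ≤ ‖∇L‖² ≤ M·L), if ρ is chosen small enough that ρ·μ − ρ²C₁M − ρC₂√M ∈ (0,1), then gradient descent with step size ρ produces a strictly decreasing loss sequence whenever the loss is positive, and L(w_t) ≤ (1 − (ρμ − ρ²C₁M − ρC₂√M))^t · L(w_0). -/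
open scoped RealInnerProductSpace

theorem stmt_3 (d : ℕ) (L : EuclideanSpace ℝ (Fin d) → ℝ)
    (hdiff : Differentiable ℝ L)
    (C₁ C₂ μ M ρ κ : ℝ) (hC₁ : 0 < C₁) (hC₂ : 0 < C₂) (hμ : 0 < μ) (hM : 0 < M) (hρ : 0 < ρ)
    (hnn : ∀ w, 0 ≤ L w)
    (hsemi : ∀ w v, L (w + v) ≤ L w + ⟪gradient L w, v⟫ + C₁ * ‖v‖ ^ 2
      + C₂ * ‖v‖ * Real.sqrt (L w))
    (hlow : ∀ w, μ * L w ≤ ‖gradient L w‖ ^ 2)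
    (hup : ∀ w, ‖gradient L w‖ ^ 2 ≤ M * L w)
    (hκdef : κ = ρ * μ - ρ ^ 2 * C₁ * M - ρ * C₂ * Real.sqrt M)
    (hκ0 : 0 < κ) (hκ1 : κ < 1)
    (w : ℕ → EuclideanSpace ℝ (Fin d))
    (hiter : ∀ t, w (t + 1) = w t - ρ • gradient L (w t)) :
    (∀ t, 0 < L (w t) → L (w (t + 1)) < L (w t)) ∧
    (∀ t, L (w t) ≤ (1 - (ρ * μ - ρ ^ 2 * C₁ * M - ρ * C₂ * Real.sqrt M)) ^ t * L (w 0)) := by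
  have hstep : ∀ t, L (w (t + 1)) ≤ (1 - κ) * L (w t) := by
    intro t
    set g := gradient L (w t) with hg
    have hwt : w (t + 1) = w t + (-ρ) • g := by
      rw [hiter t]; module
    have h1 := hsemi (w t) ((-ρ) • g)
    rw [← hwt] at h1
    have hinner : ⟪g, (-ρ) • g⟫ = -ρ * ‖g‖ ^ 2 := by
      rw [real_inner_smul_right, real_inner_self_eq_norm_sq]
    have hnorm : ‖(-ρ) • g‖ = ρ * ‖g‖ := by
      rw [norm_smul]; simp [abs_of_pos hρ]
    rw [hinner, hnorm] at h1
    -- bounds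
    have hLnn := hnn (w t)
    have hglow : μ * L (w t) ≤ ‖g‖ ^ 2 := hlow (w t)
    have hgup : ‖g‖ ^ 2 ≤ M * L (w t) := hup (w t)
    have hgle : ‖g‖ ≤ Real.sqrt M * Real.sqrt (L (w t)) := by
      rw [← Real.sqrt_mul hM.le]
      have := Real.sqrt_le_sqrt hgup
      rwa [Real.sqrt_sq (norm_nonneg g)] at this
    have hsq : Real.sqrt (L (w t)) * Real.sqrt (L (w t)) = L (w t) :=
      Real.mul_self_sqrt hLnn
    have key : L (w (t + 1)) ≤ L (w t) - ρ * (μ * L (w t))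
        + C₁ * (ρ ^ 2 * (M * L (w t))) + C₂ * ρ * (Real.sqrt M * L (w t)) := by
      refine h1.trans ?_
      have e1 : -ρ * ‖g‖ ^ 2 ≤ -ρ * (μ * L (w t)) := by nlinarith
      have e2 : C₁ * (ρ * ‖g‖) ^ 2 ≤ C₁ * (ρ ^ 2 * (M * L (w t))) := by
        have := mul_le_mul_of_nonneg_left hgup (by positivity : (0:ℝ) ≤ C₁ * ρ ^ 2)
        nlinarith
      have e3 : C₂ * (ρ * ‖g‖) * Real.sqrt (L (w t)) ≤ C₂ * ρ * (Real.sqrt M * L (w t)) := by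
        have h := mul_le_mul_of_nonneg_right hgle (Real.sqrt_nonneg (L (w t)))
        rw [mul_assoc, hsq] at h
        nlinarith [Real.sqrt_nonneg (L (w t)), mul_le_mul_of_nonneg_left h (mul_pos hC₂ hρ).le]
      linarith
    have : L (w t) - ρ * (μ * L (w t)) + C₁ * (ρ ^ 2 * (M * L (w t)))
        + C₂ * ρ * (Real.sqrt M * L (w t)) = (1 - κ) * L (w t) := by
      rw [hκdef]; ring
    linarith
  constructor
  · intro t hLpos
    calc L (w (t + 1)) ≤ (1 - κ) * L (w t) := hstep t
      _ < 1 * L (w t) := by nlinarith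
      _ = L (w t) := one_mul _
  · intro t
    rw [← hκdef]
    induction t with
    | zero => simp
    | succ n ih =>
      calc L (w (n + 1)) ≤ (1 - κ) * L (w n) := hstep n
        _ ≤ (1 - κ) * ((1 - κ) ^ n * L (w 0)) := by
            apply mul_le_mul_of_nonneg_left ih (by linarith)
        _ = (1 - κ) ^ (n + 1) * L (w 0) := by ring
end
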